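/- In the biased majority model on the torus T_{n,n} with von Neumann neighborhood, if in some generation all blue cells are contained in a union of axis-aligned rectangles whose pairwise (Moore) distance is at least 2 and which do not cover all of V, then every red cell outside these rectangles remains red in all subsequent generations; in particular red survives forever. -/

import Mathlib

/-- Number of blue cells among the four von Neumann neighbors of `v` in the torus. -/
def vnCount (n : ℕ) (g : ZMod n × ZMod n → Bool) (v : ZMod n × ZMod n) : ℕ :=
  (if g (v.1 + 1, v.2) = true then 1 else 0) + (if g (v.1 - 1, v.2) = true then 1 else 0) +
    (if g (v.1, v.2 + 1) = true then 1 else 0) + (if g (v.1, v.2 - 1) = true then 1 else 0)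

/-- One synchronous step of the majority model on the torus `T_{n,n}` with von Neumann
neighborhood: strict majority among the 4 neighbors, ties conserve the current color. -/
def torusMajStep (n : ℕ) (g : ZMod n × ZMod n → Bool) : ZMod n × ZMod n → Bool :=
  fun v => if 2 < vnCount n g v then true else if vnCount n g v < 2 then false else g v

/-- One synchronous step of the biased majority model on the torus `T_{n,n}` with
von Neumann neighborhood: a cell becomes blue iff at least 2 of its 4 neighbors are blue. -/
def torusBMajStep (n : ℕ) (g : ZMod n × ZMod n → Bool) : ZMod n × ZMod n → Bool :=
  fun v => decide (2 ≤ vnCount n g v)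

/-- Moore (8-)adjacency on the torus `T_{n,n}`. -/
def mooreAdj (n : ℕ) (u v : ZMod n × ZMod n) : Prop :=
  u ≠ v ∧ (u.1 = v.1 ∨ u.1 = v.1 + 1 ∨ v.1 = u.1 + 1) ∧
    (u.2 = v.2 ∨ u.2 = v.2 + 1 ∨ v.2 = u.2 + 1)

/-- The Moore (8-)adjacency graph on the torus `T_{n,n}`. -/
def mooreGraph (n : ℕ) : SimpleGraph (ZMod n × ZMod n) where
  Adj := mooreAdj n
  symm := by
    refine ⟨?_⟩
    rintro u v ⟨h0, h1, h2⟩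
    exact ⟨Ne.symm h0, by tauto, by tauto⟩
  loopless := ⟨fun v h => h.1 rfl⟩

/-- An axis-aligned rectangle of cells in the torus `T_{n,n}`, of side lengths at most
`n - 2` (so that it is properly surrounded by cells outside it). -/
def IsRect (n : ℕ) (R : Set (ZMod n × ZMod n)) : Prop :=
  ∃ (a b : ZMod n) (l₁ l₂ : ℕ), l₁ + 2 ≤ n ∧ l₂ + 2 ≤ n ∧
    R = {v | ∃ i j : ℕ, i < l₁ ∧ j < l₂ ∧ v = (a + (i : ZMod n), b + (j : ZMod n))}

/-! A red cell outside the rectangles has at most one blue neighbour: two of its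
neighbours in different rectangles would put these at Moore distance `≤ 2`, and two of
its neighbours in the same rectangle would force the cell itself into it. So the union of
the rectangles is closed under the biased majority rule and traps all blue cells. -/

open Finset

variable {n : ℕ}

def vnNeighbor (n : ℕ) (v : ZMod n × ZMod n) : Fin 4 → ZMod n × ZMod n :=
  ![(v.1 + 1, v.2), (v.1 - 1, v.2), (v.1, v.2 + 1), (v.1, v.2 - 1)]

theorem vnCount_eq_card (g : ZMod n × ZMod n → Bool) (v : ZMod n × ZMod n) :
    vnCount n g v = #{i | g (vnNeighbor n v i) = true} := by
  rw [card_filter, Fin.sum_univ_four]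
  rfl

/-- Neighbour positions rather than cells are compared: for `n ≤ 2` two positions may name
the same cell, which `vnCount` then counts twice. -/
def IsBMajClosed (n : ℕ) (U : Set (ZMod n × ZMod n)) : Prop :=
  ∀ v i j, i ≠ j → vnNeighbor n v i ∈ U → vnNeighbor n v j ∈ U → v ∈ U

namespace IsBMajClosed

variable {U : Set (ZMod n × ZMod n)}

theorem torusBMajStep_mem (hU : IsBMajClosed n U) {g : ZMod n × ZMod n → Bool}
    (hg : ∀ v, g v = true → v ∈ U) (v : ZMod n × ZMod n) (hv : torusBMajStep n g v = true) :
    v ∈ U := by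
  simp only [torusBMajStep, decide_eq_true_eq, vnCount_eq_card] at hv
  obtain ⟨i, hi, j, hj, hij⟩ := one_lt_card.1 hv
  simp only [mem_filter, mem_univ, true_and] at hi hj
  exact hU v i j hij (hg _ hi) (hg _ hj)

theorem iterate_torusBMajStep_eq_false (hU : IsBMajClosed n U) {g : ZMod n × ZMod n → Bool}
    (hg : ∀ v, g v = true → v ∈ U) (t : ℕ) {v : ZMod n × ZMod n} (hv : v ∉ U) :
    (torusBMajStep n)^[t] g v = false := by
  suffices ∀ t v, (torusBMajStep n)^[t] g v = true → v ∈ U by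
    simpa using mt (this t v) hv
  intro t
  induction t with
  | zero => exact hg
  | succ t ih =>
    rw [Function.iterate_succ']
    exact hU.torusBMajStep_mem ih

end IsBMajClosed

def cyclicInterval (a : ZMod n) (l : ℕ) : Set (ZMod n) :=
  {y | ∃ i < l, y = a + i}

/-- An interval of length at most `n - 2` does not wrap around the cycle: if it contains
`x - 1 = a + i` and `x + 1 = a + j`, then `j = i + 2` holds in `ℕ`, not just modulo `n`. -/
theorem mem_cyclicInterval_of_sub_one_mem_of_add_one_mem {a x : ZMod n} {l : ℕ}
    (hl : l + 2 ≤ n) (hsub : x - 1 ∈ cyclicInterval a l) (hadd : x + 1 ∈ cyclicInterval a l) :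
    x ∈ cyclicInterval a l := by
  obtain ⟨i, hi, hxi⟩ := hsub
  obtain ⟨j, hj, hxj⟩ := hadd
  have hji : ((j : ℕ) : ZMod n) = ((i + 2 : ℕ) : ZMod n) := by
    push_cast
    linear_combination hxi - hxj
  have : j = i + 2 := by
    have := congrArg ZMod.val hji
    rwa [ZMod.val_natCast_of_lt (by omega), ZMod.val_natCast_of_lt (by omega)] at this
  exact ⟨i + 1, by omega, by push_cast; linear_combination hxi⟩

theorem IsBMajClosed.prod {I J : Set (ZMod n)}
    (hI : ∀ x, x - 1 ∈ I → x + 1 ∈ I → x ∈ I) (hJ : ∀ y, y - 1 ∈ J → y + 1 ∈ J → y ∈ J) :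
    IsBMajClosed n (I ×ˢ J) := by
  rintro ⟨x, y⟩ i j hij hi hj
  have := hI x
  have := hJ y
  fin_cases i <;> fin_cases j <;> simp_all [vnNeighbor]

theorem isBMajClosed_of_isRect {R : Set (ZMod n × ZMod n)} (hR : IsRect n R) :
    IsBMajClosed n R := by
  obtain ⟨a, b, l₁, l₂, hl₁, hl₂, rfl⟩ := hR
  have hprod : {v : ZMod n × ZMod n | ∃ i j : ℕ, i < l₁ ∧ j < l₂ ∧ v = (a + i, b + j)} =
      cyclicInterval a l₁ ×ˢ cyclicInterval b l₂ := by
    ext ⟨x, y⟩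
    simp only [cyclicInterval, Set.mem_ofPred_eq, Set.mem_prod, Prod.ext_iff]
    aesop
  rw [hprod]
  exact .prod (fun _ => mem_cyclicInterval_of_sub_one_mem_of_add_one_mem hl₁)
    (fun _ => mem_cyclicInterval_of_sub_one_mem_of_add_one_mem hl₂)

theorem mooreGraph_adj_vnNeighbor (hn : n ≠ 1) (v : ZMod n × ZMod n) (i : Fin 4) :
    (mooreGraph n).Adj (vnNeighbor n v i) v := by
  have : Nontrivial (ZMod n) := ZMod.nontrivial_iff.2 hn
  fin_cases i <;> refine ⟨?_, ?_, ?_⟩ <;> simp [vnNeighbor, Prod.ext_iff]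

theorem isBMajClosed_iUnion {ι : Type*} {R : ι → Set (ZMod n × ZMod n)}
    (hR : ∀ a, IsBMajClosed n (R a))
    (hdist : ∀ a b : ι, a ≠ b → ∀ u ∈ R a, ∀ v ∈ R b, 3 ≤ (mooreGraph n).dist u v) :
    IsBMajClosed n (⋃ a, R a) := by
  rcases eq_or_ne n 1 with rfl | hn
  · intro v i _ _ hi _
    have : Subsingleton (ZMod 1) := ZMod.subsingleton_iff.2 rfl
    rwa [Subsingleton.elim v (vnNeighbor 1 v i)]
  intro v i j hij hi hj
  obtain ⟨a, hia⟩ := Set.mem_iUnion.1 hi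
  obtain ⟨b, hjb⟩ := Set.mem_iUnion.1 hj
  obtain rfl | hab := eq_or_ne a b
  · exact Set.mem_iUnion.2 ⟨a, hR a v i j hij hia hjb⟩
  have hfar := hdist a b hab _ hia _ hjb
  have hnear := SimpleGraph.dist_le <| .cons (mooreGraph_adj_vnNeighbor hn v i)
    (mooreGraph_adj_vnNeighbor hn v j).symm.toWalk
  simp only [SimpleGraph.Walk.length_cons, SimpleGraph.Walk.length_nil] at hnear
  omega

/-- Biased majority model on the torus with von Neumann neighborhood: if in some
generation all blue cells are contained in a union of axis-aligned rectangles whose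
pairwise Moore distance is at least 2 (i.e. Moore-graph distance at least 3) and which
do not cover the whole torus, then every cell outside these rectangles remains red in
all subsequent generations; in particular red survives forever. -/
theorem stmt18 (n : ℕ) (g : ZMod n × ZMod n → Bool) {ι : Type*}
    (R : ι → Set (ZMod n × ZMod n)) (hrect : ∀ a, IsRect n (R a))
    (hdist : ∀ a b : ι, a ≠ b → ∀ u ∈ R a, ∀ v ∈ R b, 3 ≤ (mooreGraph n).dist u v)
    (hcover : ∀ v, g v = true → v ∈ ⋃ a, R a)
    (hne : (⋃ a, R a) ≠ Set.univ) :
    (∀ v, v ∉ (⋃ a, R a) → ∀ t : ℕ, (torusBMajStep n)^[t] g v = false) ∧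
      (∀ t : ℕ, ∃ v, (torusBMajStep n)^[t] g v = false) := by
  have hU : IsBMajClosed n (⋃ a, R a) :=
    isBMajClosed_iUnion (fun a => isBMajClosed_of_isRect (hrect a)) hdist
  have outside := fun v hv t => hU.iterate_torusBMajStep_eq_false hcover t (v := v) hv
  refine ⟨outside, fun t => ?_⟩
  obtain ⟨v, hv⟩ := (Set.ne_univ_iff_exists_notMem _).1 hne
  exact ⟨v, outside v hv t⟩
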